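/- arXiv:2604.28032 — 4 statements merged into one kernel-verified Lean document; each statement's English description precedes it below -/
import Mathlib

section
/- Let $\Phi$ denote the standard normal CDF and $\phi$ its density. Fix $\sigma>0$ and a sequence $\varepsilon_n$ with $\varepsilon_n = O(\sqrt{\log n / n})$ and $\varepsilon_n = \omega(1/\sqrt{n})$. Define $\delta_n := \Phi(\tfrac{1}{2\sigma\sqrt{n}} - \varepsilon_n\sigma\sqrt{n}) - e^{\varepsilon_n}\Phi(-\tfrac{1}{2\sigma\sqrt{n}} - \varepsilon_n\sigma\sqrt{n})$ and $f_n := \frac{1}{\sqrt{2\pi}\,\sigma^3\,\varepsilon_n^2\, n^{3/2}}\exp(-\sigma^2\varepsilon_n^2 n/2)$. Then $\delta_n / f_n \to 1$ as $n\to\infty$. -/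
open Real Filter MeasureTheory Asymptotics
open Set Topology

/-- The standard normal cumulative distribution function. -/
noncomputable def stdNormalCDF (t : ℝ) : ℝ :=
  ∫ s in Set.Iic t, (Real.sqrt (2 * π))⁻¹ * Real.exp (-s ^ 2 / 2)

noncomputable def gpPhi (x : ℝ) : ℝ := (Real.sqrt (2 * π))⁻¹ * Real.exp (-x ^ 2 / 2)

lemma gpPhi_pos (x : ℝ) : 0 < gpPhi x := by
  have h2π : (0:ℝ) < 2 * π := by positivity
  exact mul_pos (inv_pos.2 (Real.sqrt_pos.2 h2π)) (Real.exp_pos _)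

lemma gpPhi_neg (x : ℝ) : gpPhi (-x) = gpPhi x := by simp [gpPhi]

lemma gpPhi_cont : Continuous gpPhi := by
  unfold gpPhi; fun_prop

lemma gpPhi_integrable : Integrable gpPhi := by
  have h := integrable_exp_neg_mul_sq (b := (1:ℝ)/2) (by norm_num)
  have : Integrable fun x : ℝ => Real.exp (-x ^ 2 / 2) := by
    refine h.congr (Eventually.of_forall fun x => ?_)
    ring_nf
  exact this.const_mul _

lemma hasDerivAt_gpPhi (x : ℝ) : HasDerivAt gpPhi (-x * gpPhi x) x := by
  have h1 : HasDerivAt (fun x : ℝ => -x ^ 2 / 2) (-x) x := by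
    have := ((hasDerivAt_pow 2 x).neg).div_const 2
    refine this.congr_deriv ?_
    push_cast; ring
  have h2 := (h1.exp).const_mul (Real.sqrt (2 * π))⁻¹
  have he : -x * gpPhi x = (Real.sqrt (2 * π))⁻¹ * (Real.exp (-x ^ 2 / 2) * -x) := by
    unfold gpPhi; ring
  rw [he]; exact h2

noncomputable def gpQ (x : ℝ) : ℝ := stdNormalCDF (-x)

lemma gpQ_eq (x : ℝ) : gpQ x = ∫ s in Set.Ioi x, gpPhi s := by
  have h := integral_comp_neg_Iic (-x) gpPhi
  simp only [neg_neg] at h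
  rw [gpQ, stdNormalCDF, ← h]
  refine setIntegral_congr_fun measurableSet_Iic fun s _ => ?_
  simp [gpPhi]

lemma hasDerivAt_stdNormalCDF (x : ℝ) : HasDerivAt stdNormalCDF (gpPhi x) x := by
  have hint : ∀ t : ℝ, stdNormalCDF t = stdNormalCDF 0 + ∫ s in (0:ℝ)..t, gpPhi s := by
    intro t
    have := intervalIntegral.integral_Iic_sub_Iic (f := gpPhi) (μ := volume)
      gpPhi_integrable.integrableOn gpPhi_integrable.integrableOn (a := 0) (b := t)
    have h2 : stdNormalCDF t = ∫ s in Set.Iic t, gpPhi s := rfl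
    have h0 : stdNormalCDF 0 = ∫ s in Set.Iic (0:ℝ), gpPhi s := rfl
    rw [h2, h0]; linarith [this]
  have hD : HasDerivAt (fun t => ∫ s in (0:ℝ)..t, gpPhi s) (gpPhi x) x := by
    refine intervalIntegral.integral_hasDerivAt_right
      (gpPhi_integrable.intervalIntegrable) ?_ gpPhi_cont.continuousAt
    exact gpPhi_cont.aestronglyMeasurable.stronglyMeasurableAtFilter
  have := (hD.const_add (stdNormalCDF 0))
  refine HasDerivAt.congr_of_eventuallyEq this (Eventually.of_forall fun t => hint t)

lemma hasDerivAt_gpQ (x : ℝ) : HasDerivAt gpQ (-gpPhi x) x := by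
  have h := (hasDerivAt_stdNormalCDF (-x)).comp x (hasDerivAt_neg x)
  exact h.congr_deriv (by rw [gpPhi_neg]; ring)

lemma gpPhi_tendsto_zero : Tendsto gpPhi atTop (𝓝 0) := by
  have h1 : Tendsto (fun x : ℝ => -x ^ 2 / 2) atTop atBot := by
    have h0 : Tendsto (fun x : ℝ => x ^ 2 / 2) atTop atTop :=
      (tendsto_pow_atTop two_ne_zero).atTop_div_const (by norm_num)
    have := tendsto_neg_atTop_atBot.comp h0
    refine this.congr fun x => by simp [neg_div]
  have h2 : Tendsto (fun x : ℝ => Real.exp (-x ^ 2 / 2)) atTop (𝓝 0) :=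
    Real.tendsto_exp_atBot.comp h1
  have h3 := h2.const_mul (Real.sqrt (2 * π))⁻¹
  rw [mul_zero] at h3
  exact h3

lemma hasDerivAt_gpF1 {s : ℝ} (hs : s ≠ 0) :
    HasDerivAt (fun s : ℝ => gpPhi s * (1 / s - 1 / s ^ 3)) (gpPhi s * (3 / s ^ 4 - 1)) s := by
  have ha : HasDerivAt (fun s : ℝ => 1 / s - 1 / s ^ 3)
      (-(s ^ 2)⁻¹ - -(3 * s ^ 2) / (s ^ 3) ^ 2) s := by
    simp only [one_div]
    exact (hasDerivAt_inv hs).sub (((hasDerivAt_pow 3 s).inv (pow_ne_zero 3 hs)).congr_deriv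
      (by push_cast; ring))
  have h := (hasDerivAt_gpPhi s).mul ha
  refine h.congr_deriv ?_
  have hphi := (gpPhi_pos s).ne'
  field_simp
  ring

lemma hasDerivAt_gpF2 {s : ℝ} (hs : s ≠ 0) :
    HasDerivAt (fun s : ℝ => -(gpPhi s * (1 / s - 1 / s ^ 3 + 3 / s ^ 5)))
      (gpPhi s * (1 + 15 / s ^ 6)) s := by
  have ha : HasDerivAt (fun s : ℝ => 1 / s - 1 / s ^ 3 + 3 / s ^ 5)
      ((-(s ^ 2)⁻¹ - -(3 * s ^ 2) / (s ^ 3) ^ 2) + 3 * (-(5 * s ^ 4) / (s ^ 5) ^ 2)) s := by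
    simp only [one_div, div_eq_mul_inv  (3:ℝ)]
    refine ((hasDerivAt_inv hs).sub (((hasDerivAt_pow 3 s).inv (pow_ne_zero 3 hs)).congr_deriv
      (by push_cast; ring))).add ?_
    exact (((hasDerivAt_pow 5 s).inv (pow_ne_zero 5 hs)).congr_deriv (by push_cast; ring)).const_mul 3
  have h := ((hasDerivAt_gpPhi s).mul ha).neg
  refine h.congr_deriv ?_
  have hphi := (gpPhi_pos s).ne'
  field_simp
  ring

lemma gpA_tendsto_zero (c3 c5 : ℝ) :
    Tendsto (fun R : ℝ => gpPhi R * (1 / R + c3 / R ^ 3 + c5 / R ^ 5)) atTop (𝓝 0) := by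
  have h : Tendsto (fun R : ℝ => 1 / R + c3 / R ^ 3 + c5 / R ^ 5) atTop (𝓝 0) := by
    have hp : ∀ k : ℕ, k ≠ 0 → Tendsto (fun R : ℝ => 1 / R ^ k) atTop (𝓝 0) := by
      intro k hk
      have h1 : Tendsto (fun R : ℝ => R ^ k) atTop atTop := tendsto_pow_atTop hk
      have h2 := tendsto_inv_atTop_zero.comp h1
      simpa [one_div, Function.comp_def] using h2
    have h0 := ((hp 1 one_ne_zero).add ((hp 3 (by norm_num)).const_mul c3)).add
      ((hp 5 (by norm_num)).const_mul c5)
    simp only [add_zero, mul_zero] at h0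
    refine h0.congr fun R => by ring
  simpa using gpPhi_tendsto_zero.mul h

lemma gpQ_ge {x : ℝ} (hx : 0 < x) : gpPhi x * (1 / x - 1 / x ^ 3) ≤ gpQ x := by
  have htend1 : Tendsto (fun R => ∫ s in x..R, gpPhi s) atTop (𝓝 (gpQ x)) := by
    rw [gpQ_eq]
    exact intervalIntegral_tendsto_integral_Ioi x gpPhi_integrable.integrableOn tendsto_id
  have htend2 : Tendsto (fun R : ℝ => gpPhi x * (1 / x - 1 / x ^ 3)
      - gpPhi R * (1 / R - 1 / R ^ 3)) atTop (𝓝 (gpPhi x * (1 / x - 1 / x ^ 3))) := by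
    have := gpA_tendsto_zero (-1) 0
    have h2 : Tendsto (fun R : ℝ => gpPhi R * (1 / R - 1 / R ^ 3)) atTop (𝓝 0) := by
      refine this.congr fun R => by ring_nf
    have h4 := (tendsto_const_nhds (x := gpPhi x * (1 / x - 1 / x ^ 3))
      (f := atTop (α := ℝ))).sub h2
    rw [sub_zero] at h4
    exact h4
  refine le_of_tendsto_of_tendsto htend2 htend1 ?_
  filter_upwards [eventually_ge_atTop x] with R hR
  have hcont : ContinuousOn (fun s : ℝ => gpPhi s * (1 - 3 / s ^ 4)) (Set.uIcc x R) := by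
    apply ContinuousOn.mul gpPhi_cont.continuousOn
    apply ContinuousOn.sub continuousOn_const
    apply ContinuousOn.div continuousOn_const (by fun_prop)
    intro s hs
    rw [Set.uIcc_of_le hR] at hs
    exact pow_ne_zero 4 (lt_of_lt_of_le hx hs.1).ne'
  have hftc : ∫ s in x..R, gpPhi s * (1 - 3 / s ^ 4)
      = gpPhi x * (1 / x - 1 / x ^ 3) - gpPhi R * (1 / R - 1 / R ^ 3) := by
    have := intervalIntegral.integral_eq_sub_of_hasDerivAt
      (f := fun s : ℝ => -(gpPhi s * (1 / s - 1 / s ^ 3)))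
      (f' := fun s : ℝ => gpPhi s * (1 - 3 / s ^ 4)) (a := x) (b := R)
      (fun t ht => ?_) (hcont.intervalIntegrable)
    · rw [this]; ring
    · rw [Set.uIcc_of_le hR] at ht
      have hne : t ≠ 0 := (lt_of_lt_of_le hx ht.1).ne'
      have := (hasDerivAt_gpF1 hne).neg
      exact this.congr_deriv (by ring)
  rw [← hftc]
  refine intervalIntegral.integral_mono_on hR hcont.intervalIntegrable
    (gpPhi_cont.continuousOn.intervalIntegrable) fun s hs => ?_
  have hs0 : 0 < s := lt_of_lt_of_le hx hs.1
  have : (0:ℝ) < 3 / s ^ 4 := by positivity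
  nlinarith [gpPhi_pos s]

lemma gpQ_le {x : ℝ} (hx : 0 < x) : gpQ x ≤ gpPhi x * (1 / x - 1 / x ^ 3 + 3 / x ^ 5) := by
  have htend1 : Tendsto (fun R => ∫ s in x..R, gpPhi s) atTop (𝓝 (gpQ x)) := by
    rw [gpQ_eq]
    exact intervalIntegral_tendsto_integral_Ioi x gpPhi_integrable.integrableOn tendsto_id
  have htend2 : Tendsto (fun R : ℝ => gpPhi x * (1 / x - 1 / x ^ 3 + 3 / x ^ 5)
      - gpPhi R * (1 / R - 1 / R ^ 3 + 3 / R ^ 5)) atTop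
      (𝓝 (gpPhi x * (1 / x - 1 / x ^ 3 + 3 / x ^ 5))) := by
    have := gpA_tendsto_zero (-1) 3
    have h2 : Tendsto (fun R : ℝ => gpPhi R * (1 / R - 1 / R ^ 3 + 3 / R ^ 5)) atTop (𝓝 0) :=
      this.congr fun R => by ring_nf
    have h4 := (tendsto_const_nhds (x := gpPhi x * (1 / x - 1 / x ^ 3 + 3 / x ^ 5))
      (f := atTop (α := ℝ))).sub h2
    rw [sub_zero] at h4
    exact h4
  refine le_of_tendsto_of_tendsto htend1 htend2 ?_
  filter_upwards [eventually_ge_atTop x] with R hR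
  have hcont : ContinuousOn (fun s : ℝ => gpPhi s * (1 + 15 / s ^ 6)) (Set.uIcc x R) := by
    apply ContinuousOn.mul gpPhi_cont.continuousOn
    apply ContinuousOn.add continuousOn_const
    apply ContinuousOn.div continuousOn_const (by fun_prop)
    intro s hs
    rw [Set.uIcc_of_le hR] at hs
    exact pow_ne_zero 6 (lt_of_lt_of_le hx hs.1).ne'
  have hftc : ∫ s in x..R, gpPhi s * (1 + 15 / s ^ 6)
      = gpPhi x * (1 / x - 1 / x ^ 3 + 3 / x ^ 5) - gpPhi R * (1 / R - 1 / R ^ 3 + 3 / R ^ 5) := by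
    have := intervalIntegral.integral_eq_sub_of_hasDerivAt
      (f := fun s : ℝ => -(gpPhi s * (1 / s - 1 / s ^ 3 + 3 / s ^ 5)))
      (f' := fun s : ℝ => gpPhi s * (1 + 15 / s ^ 6)) (a := x) (b := R)
      (fun t ht => ?_) (hcont.intervalIntegrable)
    · rw [this]; ring
    · rw [Set.uIcc_of_le hR] at ht
      exact hasDerivAt_gpF2 (lt_of_lt_of_le hx ht.1).ne'
  rw [← hftc]
  refine intervalIntegral.integral_mono_on hR
    (gpPhi_cont.continuousOn.intervalIntegrable) hcont.intervalIntegrable fun s hs => ?_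
  have hs0 : 0 < s := lt_of_lt_of_le hx hs.1
  have : (0:ℝ) < 15 / s ^ 6 := by positivity
  nlinarith [gpPhi_pos s]

noncomputable def gpM (x : ℝ) : ℝ := gpQ x / gpPhi x

lemma hasDerivAt_gpM (x : ℝ) : HasDerivAt gpM (x * gpM x - 1) x := by
  have h := (hasDerivAt_gpQ x).div (hasDerivAt_gpPhi x) (gpPhi_pos x).ne'
  have he : (-gpPhi x * gpPhi x - gpQ x * (-x * gpPhi x)) / gpPhi x ^ 2
      = x * gpM x - 1 := by
    have hphi := (gpPhi_pos x).ne'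
    unfold gpM
    field_simp
    ring
  rw [he] at h
  exact h

lemma gpM_lb {x : ℝ} (hx : 0 < x) : 1 / x - 1 / x ^ 3 ≤ gpM x := by
  rw [gpM, le_div_iff₀ (gpPhi_pos x)]
  have := gpQ_ge hx
  nlinarith [gpPhi_pos x]

lemma gpM_ub {x : ℝ} (hx : 0 < x) : gpM x ≤ 1 / x - 1 / x ^ 3 + 3 / x ^ 5 := by
  rw [gpM, div_le_iff₀ (gpPhi_pos x)]
  have := gpQ_le hx
  nlinarith [gpPhi_pos x]

lemma gpM_diff_bounds {u v : ℝ} (hu : 0 < u) (huv : u < v) :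
    (v - u) * (1 / v ^ 2 - 3 / u ^ 4) ≤ gpM u - gpM v ∧
      gpM u - gpM v ≤ (v - u) * (1 / u ^ 2) := by
  have hcont : ContinuousOn gpM (Set.Icc u v) := fun t _ =>
    (hasDerivAt_gpM t).continuousAt.continuousWithinAt
  obtain ⟨c, hc, hceq⟩ := exists_hasDerivAt_eq_slope gpM (fun t => t * gpM t - 1) huv
    hcont (fun t _ => hasDerivAt_gpM t)
  have hc0 : 0 < c := lt_trans hu hc.1
  have hdiff : gpM u - gpM v = (v - u) * (1 - c * gpM c) := by
    have hvu : v - u ≠ 0 := by linarith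
    field_simp at hceq
    nlinarith [hceq]
  have h1 : 1 - c * gpM c ≤ 1 / c ^ 2 := by
    have := gpM_lb hc0
    have hc4 : (0:ℝ) < c ^ 3 := by positivity
    have : c * (1 / c - 1 / c ^ 3) ≤ c * gpM c := by nlinarith
    have he : c * (1 / c - 1 / c ^ 3) = 1 - 1 / c ^ 2 := by field_simp
    linarith [he ▸ this]
  have h2 : 1 / c ^ 2 - 3 / c ^ 4 ≤ 1 - c * gpM c := by
    have := gpM_ub hc0
    have : c * gpM c ≤ c * (1 / c - 1 / c ^ 3 + 3 / c ^ 5) := by nlinarith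
    have he : c * (1 / c - 1 / c ^ 3 + 3 / c ^ 5) = 1 - 1 / c ^ 2 + 3 / c ^ 4 := by
      field_simp
    linarith [he ▸ this]
  have hvu : 0 < v - u := by linarith
  constructor
  · rw [hdiff]
    have ha : 1 / v ^ 2 ≤ 1 / c ^ 2 := by
      apply one_div_le_one_div_of_le (by positivity)
      nlinarith [hc.2]
    have hb : 3 / c ^ 4 ≤ 3 / u ^ 4 := by
      apply div_le_div_of_nonneg_left (by norm_num) (by positivity)
      exact pow_le_pow_left₀ hu.le hc.1.le 4
    nlinarith
  · rw [hdiff]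
    have ha : 1 / c ^ 2 ≤ 1 / u ^ 2 := by
      apply one_div_le_one_div_of_le (by positivity)
      nlinarith [hc.1]
    nlinarith

set_option maxHeartbeats 1000000 in
/-- Asymptotic equivalence of the analytic Gaussian privacy profile (sensitivity `1/n`,
noise scale `σ/√n`) with the template `f_{n,ε}(σ)` in the high-privacy scaling regime. -/
theorem gaussian_profile_matches_template (σ : ℝ) (hσ : 0 < σ) (ε : ℕ → ℝ)
    (hεpos : ∀ n, 0 < ε n)
    (hO : ε =O[atTop] fun n : ℕ => Real.sqrt (Real.log n / n))
    (hω : (fun n : ℕ => 1 / Real.sqrt n) =o[atTop] ε) :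
    Tendsto (fun n : ℕ =>
      (stdNormalCDF (1 / (2 * σ * Real.sqrt n) - ε n * σ * Real.sqrt n)
        - Real.exp (ε n) *
          stdNormalCDF (-(1 / (2 * σ * Real.sqrt n)) - ε n * σ * Real.sqrt n)) /
      ((Real.sqrt (2 * π) * σ ^ 3 * ε n ^ 2 * (n : ℝ) ^ ((3 : ℝ) / 2))⁻¹ *
        Real.exp (-(σ ^ 2 * ε n ^ 2 * n) / 2)))
      atTop (nhds 1) := by
  have hgpQM : ∀ x : ℝ, gpQ x = gpPhi x * gpM x := by
    intro x
    have h := (gpPhi_pos x).ne'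
    unfold gpM
    rw [← mul_div_assoc, mul_comm, mul_div_assoc, div_self h, mul_one]
  set F : ℕ → ℝ := fun n : ℕ =>
      (stdNormalCDF (1 / (2 * σ * Real.sqrt n) - ε n * σ * Real.sqrt n)
        - Real.exp (ε n) *
          stdNormalCDF (-(1 / (2 * σ * Real.sqrt n)) - ε n * σ * Real.sqrt n)) /
      ((Real.sqrt (2 * π) * σ ^ 3 * ε n ^ 2 * (n : ℝ) ^ ((3 : ℝ) / 2))⁻¹ *
        Real.exp (-(σ ^ 2 * ε n ^ 2 * n) / 2)) with hFD
  set a : ℕ → ℝ := fun n => 1 / (2 * σ * Real.sqrt n) with haD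
  set b : ℕ → ℝ := fun n => ε n * σ * Real.sqrt n with hbD
  set L : ℕ → ℝ := fun n => Real.exp (a n * b n - a n ^ 2 / 2) *
      (b n ^ 2 * (1 / (b n + a n) ^ 2 - 3 / (b n - a n) ^ 4)) with hLD
  set U : ℕ → ℝ := fun n => Real.exp (a n * b n - a n ^ 2 / 2) *
      (b n ^ 2 * (1 / (b n - a n) ^ 2)) with hUD
  have hsqpos : ∀ n : ℕ, 1 ≤ n → (0:ℝ) < Real.sqrt n := by
    intro n hn
    exact Real.sqrt_pos.2 (by exact_mod_cast Nat.lt_of_lt_of_le Nat.zero_lt_one hn)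
  -- √n → ∞
  have hsq : Tendsto (fun n : ℕ => Real.sqrt n) atTop atTop := by
    have h1 : Tendsto (fun x : ℝ => x ^ ((1:ℝ)/2)) atTop atTop := tendsto_rpow_atTop (by norm_num)
    exact (h1.comp tendsto_natCast_atTop_atTop).congr fun n => (Real.sqrt_eq_rpow _).symm
  -- ε → 0
  have hε0 : Tendsto ε atTop (𝓝 0) := by
    refine hO.trans_tendsto ?_
    have h1 : Tendsto (fun x : ℝ => Real.log x / x) atTop (𝓝 0) := by
      simpa using Real.isLittleO_log_id_atTop.tendsto_div_nhds_zero
    have h2 := h1.comp tendsto_natCast_atTop_atTop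
    have h3 := (Real.continuous_sqrt.tendsto 0).comp h2
    rw [Real.sqrt_zero] at h3
    exact h3
  -- b → ∞
  have hbt : Tendsto b atTop atTop := by
    have hd := hω.tendsto_div_nhds_zero
    have hee : (fun n : ℕ => (1 / Real.sqrt n) / ε n) =ᶠ[atTop]
        fun n : ℕ => (ε n * Real.sqrt n)⁻¹ := by
      filter_upwards [eventually_ge_atTop 1] with n hn
      have h0 := hsqpos n hn
      field_simp
    have hd2 : Tendsto (fun n : ℕ => (ε n * Real.sqrt n)⁻¹) atTop (𝓝 0) := hd.congr' hee
    have hd3 : Tendsto (fun n : ℕ => (ε n * Real.sqrt n)⁻¹) atTop (𝓝[>] 0) := by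
      refine tendsto_nhdsWithin_of_tendsto_nhds_of_eventually_within _ hd2 ?_
      filter_upwards [eventually_ge_atTop 1] with n hn
      exact inv_pos.2 (mul_pos (hεpos n) (hsqpos n hn))
    have hd4 := hd3.inv_tendsto_nhdsGT_zero
    have hd5 : Tendsto (fun n : ℕ => ε n * Real.sqrt n) atTop atTop := by
      refine hd4.congr fun n => ?_
      simp
    have hd6 := hd5.atTop_mul_const hσ
    refine hd6.congr fun n => by simp only [hbD]; ring
  -- a → 0
  have hat : Tendsto a atTop (𝓝 0) := by
    have h1 := tendsto_inv_atTop_zero.comp hsq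
    have h2 := h1.const_mul ((2*σ)⁻¹)
    rw [mul_zero] at h2
    refine h2.congr fun n => ?_
    show (2*σ)⁻¹ * (Real.sqrt n)⁻¹ = a n
    simp only [haD]
    rw [one_div, show (2 * σ * Real.sqrt n)⁻¹ = (2*σ)⁻¹ * (Real.sqrt n)⁻¹ from mul_inv _ _]
  -- a * b → 0
  have hab0 : Tendsto (fun n => a n * b n) atTop (𝓝 0) := by
    have h1 := hε0.div_const 2
    rw [zero_div] at h1
    refine Tendsto.congr' ?_ h1
    filter_upwards [eventually_ge_atTop 1] with n hn
    have h0 := hsqpos n hn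
    simp only [haD, hbD]
    field_simp
  -- a / b → 0
  have ht0 : Tendsto (fun n => a n / b n) atTop (𝓝 0) := by
    refine squeeze_zero' ?_ ?_ hat
    · filter_upwards [eventually_ge_atTop 1, hbt.eventually_ge_atTop 1] with n hn hb1
      have h0 := hsqpos n hn
      have ha0 : 0 < a n := by simp only [haD]; positivity
      positivity
    · filter_upwards [eventually_ge_atTop 1, hbt.eventually_ge_atTop 1] with n hn hb1
      have h0 := hsqpos n hn
      have ha0 : 0 < a n := by simp only [haD]; positivity
      exact div_le_self ha0.le hb1
  -- exp factor → 1
  have hE : Tendsto (fun n => Real.exp (a n * b n - a n ^ 2 / 2)) atTop (𝓝 1) := by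
    have harg : Tendsto (fun n => a n * b n - a n ^ 2 / 2) atTop (𝓝 0) := by
      have h2 := ((hat.mul hat).div_const 2)
      rw [mul_zero, zero_div] at h2
      have := hab0.sub h2
      rw [sub_zero] at this
      refine this.congr fun n => by ring
    have := (Real.continuous_exp.tendsto 0).comp harg
    simpa [Function.comp_def] using this
  have g1 : Tendsto (fun n => (1 - a n / b n)⁻¹) atTop (𝓝 1) := by
    have := ((tendsto_const_nhds (x := (1:ℝ)) (f := atTop (α := ℕ))).sub ht0).inv₀ (by norm_num)
    simpa using this
  have g2 : Tendsto (fun n => (1 + a n / b n)⁻¹) atTop (𝓝 1) := by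
    have := ((tendsto_const_nhds (x := (1:ℝ)) (f := atTop (α := ℕ))).add ht0).inv₀ (by norm_num)
    simpa using this
  have hbinv : Tendsto (fun n => (b n ^ 2)⁻¹) atTop (𝓝 0) := by
    have hb2 : Tendsto (fun n => b n ^ 2) atTop atTop :=
      (tendsto_pow_atTop two_ne_zero).comp hbt
    exact tendsto_inv_atTop_zero.comp hb2
  -- master eventual facts
  have hev : ∀ᶠ n : ℕ in atTop, 0 < a n ∧ 1 ≤ b n - a n ∧ 0 < Real.sqrt n := by
    filter_upwards [eventually_ge_atTop 1, hbt.eventually_ge_atTop 2,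
      hat.eventually_lt_const (by norm_num : (0:ℝ) < 1)] with n hn hb2 ha1
    have h0 := hsqpos n hn
    have ha0 : 0 < a n := by simp only [haD]; positivity
    exact ⟨ha0, by linarith, h0⟩
  -- U → 1
  have hUt : Tendsto U atTop (𝓝 1) := by
    have hU2 : Tendsto (fun n => b n ^ 2 * (1 / (b n - a n) ^ 2)) atTop (𝓝 1) := by
      have h := g1.mul g1
      rw [mul_one] at h
      refine Tendsto.congr' ?_ h
      filter_upwards [hev] with n hn
      obtain ⟨ha0, hba, hsn⟩ := hn
      have hune : b n - a n ≠ 0 := by linarith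
      have hbne : b n ≠ 0 := by nlinarith
      field_simp
    have := hE.mul hU2
    rw [mul_one] at this
    exact this
  -- L → 1
  have hLt : Tendsto L atTop (𝓝 1) := by
    have hL2 : Tendsto (fun n => b n ^ 2 * (1 / (b n + a n) ^ 2 - 3 / (b n - a n) ^ 4))
        atTop (𝓝 1) := by
      have h := (g2.mul g2).sub ((((g1.mul g1).mul (g1.mul g1)).mul hbinv).const_mul 3)
      norm_num at h
      refine Tendsto.congr' ?_ h
      filter_upwards [hev] with n hn
      obtain ⟨ha0, hba, hsn⟩ := hn
      have hune : b n - a n ≠ 0 := by linarith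
      have hbne : b n ≠ 0 := by nlinarith
      have hvne : b n + a n ≠ 0 := by nlinarith
      field_simp
    have := hE.mul hL2
    rw [mul_one] at this
    exact this
  -- the sandwich
  have hbound : ∀ᶠ n : ℕ in atTop, L n ≤ F n ∧ F n ≤ U n := by
    filter_upwards [hev, eventually_ge_atTop 1] with n hn hn1
    obtain ⟨ha0, hba, hsn⟩ := hn
    have hu0 : 0 < b n - a n := by linarith
    have hb0 : 0 < b n := by linarith
    have huv : b n - a n < b n + a n := by linarith
    have e1 : 1 / (2 * σ * Real.sqrt n) = a n := by simp only [haD]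
    have e2 : ε n * σ * Real.sqrt n = b n := by simp only [hbD]
    have hQ1 : stdNormalCDF (a n - b n) = gpQ (b n - a n) := by
      unfold gpQ; congr 1; ring
    have hQ2 : stdNormalCDF (-(a n) - b n) = gpQ (b n + a n) := by
      unfold gpQ; congr 1; ring
    have hσ' : σ ≠ 0 := hσ.ne'
    have hsn' : Real.sqrt n ≠ 0 := hsn.ne'
    have habn : a n * b n = ε n / 2 := by
      simp only [haD, hbD]
      field_simp
    have hexp3 : Real.exp (ε n) * gpPhi (b n + a n) = gpPhi (b n - a n) := by
      simp only [gpPhi]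
      have harg : ε n + -(b n + a n) ^ 2 / 2 = -(b n - a n) ^ 2 / 2 := by
        linear_combination (-2 : ℝ) * habn
      rw [mul_left_comm, ← Real.exp_add, harg]
    have hnum : stdNormalCDF (a n - b n) - Real.exp (ε n) * stdNormalCDF (-(a n) - b n)
        = gpPhi (b n - a n) * (gpM (b n - a n) - gpM (b n + a n)) := by
      rw [hQ1, hQ2, hgpQM (b n - a n), hgpQM (b n + a n), ← mul_assoc, hexp3]
      ring
    have hfden : (Real.sqrt (2 * π) * σ ^ 3 * ε n ^ 2 * (n : ℝ) ^ ((3 : ℝ) / 2))⁻¹ *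
        Real.exp (-(σ ^ 2 * ε n ^ 2 * n) / 2) = 2 * a n * gpPhi (b n) / b n ^ 2 := by
      have hrpow : ((n : ℝ)) ^ ((3:ℝ)/2) = Real.sqrt n ^ 3 := by
        rw [show ((3:ℝ)/2) = (1/2) * ((3:ℕ):ℝ) by norm_num,
          Real.rpow_mul (Nat.cast_nonneg n), Real.rpow_natCast, ← Real.sqrt_eq_rpow]
      have hb2 : σ ^ 2 * ε n ^ 2 * (n:ℝ) = b n ^ 2 := by
        simp only [hbD]
        rw [mul_pow, mul_pow, Real.sq_sqrt (Nat.cast_nonneg n)]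
        ring
      rw [hrpow, hb2]
      simp only [gpPhi, haD, hbD]
      have h2π : Real.sqrt (2*π) ≠ 0 := ne_of_gt (Real.sqrt_pos.2 (by positivity))
      have hεn : ε n ≠ 0 := (hεpos n).ne'
      have hsn'' : Real.sqrt n ≠ 0 := hsn.ne'
      generalize Real.exp (-(ε n * σ * Real.sqrt n) ^ 2 / 2) = X
      field_simp
    have hratio : gpPhi (b n - a n) * (gpM (b n - a n) - gpM (b n + a n)) /
        (2 * a n * gpPhi (b n) / b n ^ 2)
        = Real.exp (a n * b n - a n ^ 2 / 2) *
          (b n ^ 2 * ((gpM (b n - a n) - gpM (b n + a n)) / (2 * a n))) := by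
      have hphiE : gpPhi (b n - a n) = Real.exp (a n * b n - a n ^ 2 / 2) * gpPhi (b n) := by
        simp only [gpPhi]
        have harg : (a n * b n - a n ^ 2 / 2) + -(b n) ^ 2 / 2 = -(b n - a n) ^ 2 / 2 := by
          ring
        rw [mul_left_comm, ← Real.exp_add, harg]
      rw [hphiE]
      have hphib : gpPhi (b n) ≠ 0 := (gpPhi_pos (b n)).ne'
      field_simp
    have hFn : F n = Real.exp (a n * b n - a n ^ 2 / 2) *
        (b n ^ 2 * ((gpM (b n - a n) - gpM (b n + a n)) / (2 * a n))) := by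
      simp only [hFD]
      rw [e1, e2, hnum, hfden, hratio]
    obtain ⟨hd1, hd2⟩ := gpM_diff_bounds hu0 huv
    have hvu : (b n + a n) - (b n - a n) = 2 * a n := by ring
    rw [hvu] at hd1 hd2
    have h2a : (0:ℝ) < 2 * a n := by linarith
    have hup : (gpM (b n - a n) - gpM (b n + a n)) / (2 * a n) ≤ 1 / (b n - a n) ^ 2 := by
      rw [div_le_iff₀ h2a]
      linarith
    have hlo : 1 / (b n + a n) ^ 2 - 3 / (b n - a n) ^ 4
        ≤ (gpM (b n - a n) - gpM (b n + a n)) / (2 * a n) := by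
      rw [le_div_iff₀ h2a]
      linarith
    constructor
    · rw [hFn]
      simp only [hLD]
      refine mul_le_mul_of_nonneg_left ?_ (Real.exp_pos _).le
      exact mul_le_mul_of_nonneg_left hlo (by positivity)
    · rw [hFn]
      simp only [hUD]
      refine mul_le_mul_of_nonneg_left ?_ (Real.exp_pos _).le
      exact mul_le_mul_of_nonneg_left hup (by positivity)
  refine tendsto_of_tendsto_of_tendsto_of_le_of_le' hLt hUt ?_ ?_
  · filter_upwards [hbound] with n hn using hn.1
  · filter_upwards [hbound] with n hn using hn.2
end

section
/- Fix $\gamma \in (0,1)$, $\sigma_0 > 0$. Let $\mathcal{R}^{\mathsf{BMG}}_x := \gamma\,\mathcal{N}(0,\sigma_0^2 I_d) + (1-\gamma)\,\mathcal{N}(x,\sigma_0^2 I_d)$ for $x \in \mathbb{B}_2^d$, with blanket distribution $\mathcal{R}_{\mathrm{BG}} = \mathcal{N}(0,\sigma_0^2 I_d)$. Then $\sup_{\|x\|_2 \le 1} \mathrm{Var}_{Y\sim\mathcal{R}_{\mathrm{BG}}}\left[\frac{\mathcal{R}^{\mathsf{BMG}}_x(Y) - \mathcal{R}_{\mathrm{BG}}(Y)}{\mathcal{R}_{\mathrm{BG}}(Y)}\right]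 = (1-\gamma)^2\left(e^{1/\sigma_0^2} - 1\right)$, and consequently the lower shuffle index satisfies $\chi_{\mathrm{lo}}^2 = \frac{\gamma}{(1-\gamma)^2}\cdot\frac{1}{e^{1/\sigma_0^2} - 1}$. -/
open MeasureTheory ProbabilityTheory Real

lemma gauss_pt (v : NNReal) (hv : v ≠ 0) (c t : ℝ) :
    gaussianPDFReal 0 v t * Real.exp (c * t)
      = Real.exp (c ^ 2 * v / 2) * gaussianPDFReal (c * v) v t := by
  have hv0 : (0:ℝ) < v := lt_of_le_of_ne v.2 (by exact_mod_cast (Ne.symm hv))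
  simp only [gaussianPDFReal_def]
  have h : -(t - 0) ^ 2 / (2 * (v:ℝ)) + c * t
      = c ^ 2 * (v:ℝ) / 2 + -(t - c * (v:ℝ)) ^ 2 / (2 * (v:ℝ)) := by
    field_simp
    ring
  rw [mul_assoc, ← Real.exp_add, h, Real.exp_add]
  ring

lemma gauss_exp_integrable (v : NNReal) (hv : v ≠ 0) (c : ℝ) :
    Integrable (fun t => Real.exp (c * t)) (gaussianReal 0 v) := by
  have hmeas : Measurable (fun x => (gaussianPDFReal 0 v x).toNNReal) :=
    (measurable_gaussianPDFReal 0 v).real_toNNReal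
  have hrw : gaussianReal 0 v
      = volume.withDensity (fun x => ((gaussianPDFReal 0 v x).toNNReal : ENNReal)) := by
    rw [gaussianReal_of_var_ne_zero 0 hv]; rfl
  rw [hrw, integrable_withDensity_iff_integrable_smul hmeas]
  have : (fun x => (gaussianPDFReal 0 v x).toNNReal • Real.exp (c * x))
      = fun x => Real.exp (c ^ 2 * v / 2) * gaussianPDFReal (c * v) v x := by
    ext x
    rw [NNReal.smul_def, smul_eq_mul, Real.coe_toNNReal _ (gaussianPDFReal_nonneg 0 v x),
      gauss_pt v hv c x]
  rw [this]
  exact (integrable_gaussianPDFReal (c * v) v).const_mul _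

lemma gauss_exp_integral (v : NNReal) (hv : v ≠ 0) (c : ℝ) :
    ∫ t, Real.exp (c * t) ∂(gaussianReal 0 v) = Real.exp (c ^ 2 * v / 2) := by
  have hmeas : Measurable (fun x => (gaussianPDFReal 0 v x).toNNReal) :=
    (measurable_gaussianPDFReal 0 v).real_toNNReal
  have hrw : gaussianReal 0 v
      = volume.withDensity (fun x => ((gaussianPDFReal 0 v x).toNNReal : ENNReal)) := by
    rw [gaussianReal_of_var_ne_zero 0 hv]; rfl
  rw [hrw, integral_withDensity_eq_integral_smul hmeas]
  have : (fun x => (gaussianPDFReal 0 v x).toNNReal • Real.exp (c * x))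
      = fun x => Real.exp (c ^ 2 * v / 2) * gaussianPDFReal (c * v) v x := by
    ext x
    rw [NNReal.smul_def, smul_eq_mul, Real.coe_toNNReal _ (gaussianPDFReal_nonneg 0 v x),
      gauss_pt v hv c x]
  rw [this, integral_const_mul, integral_gaussianPDFReal_eq_one (c * v) hv, mul_one]

lemma pi_prod_integral {d : ℕ} (μ : Measure ℝ) [IsProbabilityMeasure μ] (f : Fin d → ℝ → ℝ) :
    ∫ y : Fin d → ℝ, ∏ i, f i (y i) ∂(Measure.pi fun _ => μ) = ∏ i, ∫ t, f i t ∂μ := by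
  letI : MeasureSpace ℝ := ⟨μ⟩
  exact MeasureTheory.integral_fin_nat_prod_eq_prod f

lemma pi_prod_integrable {d : ℕ} (μ : Measure ℝ) [IsProbabilityMeasure μ] (f : Fin d → ℝ → ℝ)
    (hf : ∀ i, Integrable (f i) μ) :
    Integrable (fun y : Fin d → ℝ => ∏ i, f i (y i)) (Measure.pi fun _ => μ) := by
  letI : MeasureSpace ℝ := ⟨μ⟩
  exact MeasureTheory.Integrable.fintype_prod hf

lemma pi_exp_integrable {d : ℕ} (v : NNReal) (hv : v ≠ 0) (c : Fin d → ℝ) :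
    Integrable (fun y : Fin d → ℝ => Real.exp (∑ i, c i * y i))
      (Measure.pi fun _ => gaussianReal 0 v) := by
  have h1 : (fun y : Fin d → ℝ => Real.exp (∑ i, c i * y i))
      = fun y => ∏ i, Real.exp (c i * y i) := by
    ext y; exact Real.exp_sum _ _
  rw [h1]
  exact pi_prod_integrable _ _ (fun i => gauss_exp_integrable v hv (c i))

lemma pi_exp_integral {d : ℕ} (v : NNReal) (hv : v ≠ 0) (c : Fin d → ℝ) :
    ∫ y : Fin d → ℝ, Real.exp (∑ i, c i * y i) ∂(Measure.pi fun _ => gaussianReal 0 v)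
      = Real.exp ((v : ℝ) / 2 * ∑ i, c i ^ 2) := by
  have h1 : (fun y : Fin d → ℝ => Real.exp (∑ i, c i * y i))
      = fun y => ∏ i, Real.exp (c i * y i) := by
    ext y; exact Real.exp_sum _ _
  rw [show (∫ y : Fin d → ℝ, Real.exp (∑ i, c i * y i) ∂(Measure.pi fun _ => gaussianReal 0 v))
      = ∫ y : Fin d → ℝ, ∏ i, Real.exp (c i * y i) ∂(Measure.pi fun _ => gaussianReal 0 v) by
    rw [h1]]
  rw [pi_prod_integral (gaussianReal 0 v) (fun i t => Real.exp (c i * t))]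
  have h2 : ∀ i : Fin d, ∫ t, Real.exp (c i * t) ∂(gaussianReal 0 v)
      = Real.exp (c i ^ 2 * v / 2) := fun i => gauss_exp_integral v hv (c i)
  rw [Finset.prod_congr rfl (fun i _ => h2 i), ← Real.exp_sum]
  congr 1
  rw [Finset.mul_sum]
  exact Finset.sum_congr rfl fun i _ => by ring

lemma var_formula {d : ℕ} (γ σ0 : ℝ) (hσ : 0 < σ0) (x : Fin d → ℝ) :
    variance (fun y : Fin d → ℝ =>
        (γ + (1 - γ) *
            Real.exp ((∑ i, x i * y i) / σ0 ^ 2 -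
              (∑ i, (x i) ^ 2) / (2 * σ0 ^ 2))) - 1)
      (Measure.pi fun _ => gaussianReal 0 ⟨σ0 ^ 2, sq_nonneg σ0⟩)
      = (1 - γ) ^ 2 * (Real.exp ((∑ i, (x i) ^ 2) / σ0 ^ 2) - 1) := by
  have hσ2 : (0:ℝ) < σ0 ^ 2 := by positivity
  set v : NNReal := ⟨σ0 ^ 2, sq_nonneg σ0⟩ with hvdef
  have hvc : (v : ℝ) = σ0 ^ 2 := rfl
  have hv : v ≠ 0 := by
    intro h
    exact hσ2.ne' (by rw [← hvc, h, NNReal.coe_zero])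
  set ν : Measure (Fin d → ℝ) := Measure.pi fun _ => gaussianReal 0 v with hνdef
  haveI : IsProbabilityMeasure ν := by
    rw [hνdef]; infer_instance
  set s : ℝ := ∑ i, (x i) ^ 2 with hsdef
  -- rewrite the random variable
  have hXeq : (fun y : Fin d → ℝ =>
        (γ + (1 - γ) *
            Real.exp ((∑ i, x i * y i) / σ0 ^ 2 - s / (2 * σ0 ^ 2))) - 1)
      = fun y => (1 - γ) *
          (Real.exp ((∑ i, (x i / σ0 ^ 2) * y i) - s / (2 * σ0 ^ 2)) - 1) := by
    funext y
    rw [Finset.sum_div]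
    simp_rw [mul_div_right_comm]
    ring
  rw [hXeq, variance_const_mul]
  congr 1
  -- now compute variance of h = E - 1
  have hg_int : Integrable (fun y : Fin d → ℝ => Real.exp (∑ i, (x i / σ0 ^ 2) * y i)) ν :=
    pi_exp_integrable v hv _
  have hE_int : Integrable
      (fun y : Fin d → ℝ => Real.exp ((∑ i, (x i / σ0 ^ 2) * y i) - s / (2 * σ0 ^ 2))) ν := by
    simp_rw [Real.exp_sub]
    exact hg_int.div_const _
  have hh_int : Integrable
      (fun y : Fin d → ℝ =>
        Real.exp ((∑ i, (x i / σ0 ^ 2) * y i) - s / (2 * σ0 ^ 2)) - 1) ν :=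
    hE_int.sub (integrable_const 1)
  have hIg : ∫ y, Real.exp (∑ i, (x i / σ0 ^ 2) * y i) ∂ν = Real.exp (s / (2 * σ0 ^ 2)) := by
    rw [hνdef, pi_exp_integral v hv _]
    congr 1
    rw [hvc, hsdef]
    simp_rw [div_pow]
    rw [← Finset.sum_div]
    field_simp
  have hIE : ∫ y, Real.exp ((∑ i, (x i / σ0 ^ 2) * y i) - s / (2 * σ0 ^ 2)) ∂ν = 1 := by
    simp_rw [Real.exp_sub]
    rw [integral_div, hIg, div_self (Real.exp_ne_zero _)]
  have hIh : ∫ y, (Real.exp ((∑ i, (x i / σ0 ^ 2) * y i) - s / (2 * σ0 ^ 2)) - 1) ∂ν = 0 := by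
    rw [integral_sub hE_int (integrable_const 1), hIE, integral_const]
    simp
  -- measurability
  have hmeasA : Measurable (fun y : Fin d → ℝ => ∑ i, (x i / σ0 ^ 2) * y i) :=
    Finset.measurable_sum _ (fun i _ => (measurable_pi_apply i).const_mul _)
  have hmeash : Measurable
      (fun y : Fin d → ℝ =>
        Real.exp ((∑ i, (x i / σ0 ^ 2) * y i) - s / (2 * σ0 ^ 2)) - 1) :=
    (Real.measurable_exp.comp (hmeasA.sub measurable_const)).sub measurable_const
  -- square
  have hG2_int : Integrable
      (fun y : Fin d → ℝ => Real.exp (∑ i, (2 * (x i / σ0 ^ 2)) * y i)) ν :=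
    pi_exp_integrable v hv _
  have hsq : (fun y : Fin d → ℝ =>
        (Real.exp ((∑ i, (x i / σ0 ^ 2) * y i) - s / (2 * σ0 ^ 2)) - 1) ^ 2)
      = fun y => (Real.exp (-(s / σ0 ^ 2)) * Real.exp (∑ i, (2 * (x i / σ0 ^ 2)) * y i)
          - 2 * Real.exp ((∑ i, (x i / σ0 ^ 2) * y i) - s / (2 * σ0 ^ 2))) + 1 := by
    funext y
    have h2A : ∑ i, (2 * (x i / σ0 ^ 2)) * y i = 2 * ∑ i, (x i / σ0 ^ 2) * y i := by
      rw [Finset.mul_sum]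
      exact Finset.sum_congr rfl fun i _ => mul_assoc _ _ _
    have hE2 : Real.exp ((∑ i, (x i / σ0 ^ 2) * y i) - s / (2 * σ0 ^ 2)) ^ 2
        = Real.exp (-(s / σ0 ^ 2)) * Real.exp (∑ i, (2 * (x i / σ0 ^ 2)) * y i) := by
      rw [sq, ← Real.exp_add, ← Real.exp_add, h2A]
      congr 1
      field_simp
      ring
    rw [sub_sq, hE2]
    ring
  have hsq_int : Integrable (fun y : Fin d → ℝ =>
      (Real.exp ((∑ i, (x i / σ0 ^ 2) * y i) - s / (2 * σ0 ^ 2)) - 1) ^ 2) ν := by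
    rw [hsq]
    exact ((hG2_int.const_mul _).sub (hE_int.const_mul 2)).add (integrable_const 1)
  have hmem : MemLp (fun y : Fin d → ℝ =>
      Real.exp ((∑ i, (x i / σ0 ^ 2) * y i) - s / (2 * σ0 ^ 2)) - 1) 2 ν :=
    (memLp_two_iff_integrable_sq hmeash.aestronglyMeasurable).mpr hsq_int
  rw [variance_of_integral_eq_zero hmeash.aemeasurable hIh]
  have hIG2 : ∫ y, Real.exp (∑ i, (2 * (x i / σ0 ^ 2)) * y i) ∂ν
      = Real.exp (2 * (s / σ0 ^ 2)) := by
    rw [hνdef, pi_exp_integral v hv _]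
    congr 1
    rw [hvc, hsdef]
    simp_rw [mul_pow, div_pow]
    rw [← Finset.mul_sum, ← Finset.sum_div]
    field_simp
  have hint1 : Integrable (fun y : Fin d → ℝ =>
      Real.exp (-(s / σ0 ^ 2)) * Real.exp (∑ i, (2 * (x i / σ0 ^ 2)) * y i)
        - 2 * Real.exp ((∑ i, (x i / σ0 ^ 2) * y i) - s / (2 * σ0 ^ 2))) ν :=
    (hG2_int.const_mul _).sub (hE_int.const_mul 2)
  rw [hsq, integral_add hint1 (integrable_const 1),
    integral_sub (hG2_int.const_mul _) (hE_int.const_mul 2),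
    integral_const_mul, integral_const_mul, hIG2, hIE, integral_const]
  simp only [probReal_univ, smul_eq_mul, one_mul, mul_one]
  rw [← Real.exp_add]
  have : -(s / σ0 ^ 2) + 2 * (s / σ0 ^ 2) = s / σ0 ^ 2 := by ring
  rw [this]
  ring

/-- For the blanket-mixed Gaussian mechanism, the blanket-referenced density ratio
minus one is `ℓ₀(y) = γ + (1-γ)·exp(⟨x,y⟩/σ₀² - ‖x‖²/(2σ₀²)) - 1`, and its variance
under the blanket `N(0, σ₀² I_d)`, maximized over the unit ball `‖x‖₂ ≤ 1`, equals
`(1-γ)²(e^{1/σ₀²} - 1)`; consequently the lower shuffle index satisfies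
`χ_lo² = γ/(1-γ)² · 1/(e^{1/σ₀²} - 1)`. -/
theorem blanket_mixed_gaussian_shuffle_index (d : ℕ) (hd : 0 < d) (γ σ0 : ℝ)
    (hγ : γ ∈ Set.Ioo (0 : ℝ) 1) (hσ : 0 < σ0) :
    (⨆ x : {x : Fin d → ℝ // ∑ i, (x i) ^ 2 ≤ 1},
        variance
          (fun y : Fin d → ℝ =>
            (γ + (1 - γ) *
                Real.exp ((∑ i, x.1 i * y i) / σ0 ^ 2 -
                  (∑ i, (x.1 i) ^ 2) / (2 * σ0 ^ 2))) - 1)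
          (Measure.pi fun _ => gaussianReal 0 ⟨σ0 ^ 2, sq_nonneg σ0⟩))
        = (1 - γ) ^ 2 * (Real.exp (1 / σ0 ^ 2) - 1)
      ∧ γ / ((1 - γ) ^ 2 * (Real.exp (1 / σ0 ^ 2) - 1))
          = γ / (1 - γ) ^ 2 * (1 / (Real.exp (1 / σ0 ^ 2) - 1)) := by
  constructor
  · set F : {x : Fin d → ℝ // ∑ i, (x i) ^ 2 ≤ 1} → ℝ := fun x =>
      variance
        (fun y : Fin d → ℝ =>
          (γ + (1 - γ) *
              Real.exp ((∑ i, x.1 i * y i) / σ0 ^ 2 -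
                (∑ i, (x.1 i) ^ 2) / (2 * σ0 ^ 2))) - 1)
        (Measure.pi fun _ => gaussianReal 0 ⟨σ0 ^ 2, sq_nonneg σ0⟩) with hF
    have hval : ∀ x : {x : Fin d → ℝ // ∑ i, (x i) ^ 2 ≤ 1},
        F x = (1 - γ) ^ 2 * (Real.exp ((∑ i, (x.1 i) ^ 2) / σ0 ^ 2) - 1) :=
      fun x => var_formula γ σ0 hσ x.1
    have hub : ∀ x : {x : Fin d → ℝ // ∑ i, (x i) ^ 2 ≤ 1},
        F x ≤ (1 - γ) ^ 2 * (Real.exp (1 / σ0 ^ 2) - 1) := by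
      intro x
      rw [hval x]
      refine mul_le_mul_of_nonneg_left ?_ (sq_nonneg _)
      refine sub_le_sub_right (Real.exp_le_exp.mpr ?_) _
      exact (div_le_div_iff_of_pos_right (by positivity)).mpr x.2
    haveI : Nonempty {x : Fin d → ℝ // ∑ i, (x i) ^ 2 ≤ 1} :=
      ⟨⟨0, by simp⟩⟩
    have hbdd : BddAbove (Set.range F) := by
      refine ⟨(1 - γ) ^ 2 * (Real.exp (1 / σ0 ^ 2) - 1), ?_⟩
      rintro _ ⟨x, rfl⟩
      exact hub x
    set i0 : Fin d := ⟨0, hd⟩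
    have hs0 : ∑ i, ((fun i => if i = i0 then (1:ℝ) else 0) i) ^ 2 = 1 := by
      simp [apply_ite (fun t : ℝ => t ^ 2), Finset.sum_ite_eq']
    refine le_antisymm (ciSup_le hub) ?_
    refine le_ciSup_of_le hbdd ⟨fun i => if i = i0 then (1:ℝ) else 0, le_of_eq hs0⟩ ?_
    rw [hval ⟨fun i => if i = i0 then (1:ℝ) else 0, le_of_eq hs0⟩]
    simp only [hs0]
    exact le_rfl
  · rw [div_mul_eq_div_div, div_eq_mul_one_div]
end

section
/- Fix $d \ge 1$. For $\chi > 1$, set $A := \chi^{-2/3}$, $\gamma := 1-A$, $u := \frac{1-A}{A^2\chi^2}$, and $\sigma_0^2 := 1/\log(1+u)$. Then the resulting blanket-mixed Gaussian mechanism satisfies $\frac{\gamma}{(1-\gamma)^2(e^{1/\sigma_0^2}-1)} = \chi^2$, and its worst-case single-user mean squared error satisfies $\frac{d\,\sigma_0^2}{A^2} + \frac{\gamma}{A} = d\,\chi^2\left(1 + \frac{3}{2}\chi^{-2/3} + O(\chi^{-4/3})\right)$ as $\chi \to \infty$. -/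
open Real Filter Asymptotics

private lemma log_taylor2 (u : ℝ) (hu0 : 0 < u) (hu : u ≤ 1/2) :
    |Real.log (1 + u) - (u - u^2/2)| ≤ 2 * u^3 := by
  have hx : |(-u)| < 1 := by rw [abs_neg, abs_of_pos hu0]; linarith
  have h := Real.abs_log_sub_add_sum_range_le hx 2
  have hsum : (∑ i ∈ Finset.range 2, (-u) ^ (i+1) / ((i:ℝ)+1)) = -(u - u^2/2) := by
    simp [Finset.sum_range_succ]
    ring
  rw [hsum, sub_neg_eq_add, abs_neg, abs_of_pos hu0] at h
  have h2 : |log (1 + u) - (u - u^2/2)| ≤ u ^ 3 / (1 - u) := by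
    rw [show log (1 + u) - (u - u^2/2) = -(u - u^2/2) + log (1+u) by ring]
    simpa using h
  have h3 : u ^ 3 / (1 - u) ≤ 2 * u ^ 3 := by
    rw [div_le_iff₀ (by linarith)]
    nlinarith [pow_pos hu0 3]
  linarith

private lemma invlog_bound (u : ℝ) (hu0 : 0 < u) (hu : u ≤ 1/4) :
    |1 / Real.log (1 + u) - (1/u + 1/2)| ≤ 4 * u := by
  have ht := log_taylor2 u hu0 (by linarith)
  rw [abs_le] at ht
  set L := Real.log (1 + u) with hL
  have hu3 : (0:ℝ) < u ^ 3 := pow_pos hu0 3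
  have hLlo : u - u^2/2 - 2*u^3 ≤ L := by linarith
  have hLhi : L ≤ u - u^2/2 + 2*u^3 := by linarith
  have hXpos : 0 < u - u^2/2 - 2*u^3 := by nlinarith
  have hLpos : 0 < L := by linarith
  rw [abs_le]
  constructor
  · -- 1/u + 1/2 - 4u ≤ 1/L
    have key : L * (1/u + 1/2 - 4*u) ≤ 1 := by
      have hfac : 0 < 1/u + 1/2 - 4*u := by
        have : (4:ℝ) ≤ 1/u := by rw [le_div_iff₀ hu0]; linarith
        linarith
      have e : (u - u^2/2 + 2*u^3) * (1/u + 1/2 - 4*u) =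
          1 + (-9/4)*u^2 + 3*u^3 - 8*u^4 := by field_simp; ring
      have h1 : L * (1/u + 1/2 - 4*u) ≤ (u - u^2/2 + 2*u^3) * (1/u + 1/2 - 4*u) :=
        mul_le_mul_of_nonneg_right hLhi hfac.le
      nlinarith [sq_nonneg u, pow_pos hu0 4]
    have : 1/u + 1/2 - 4*u ≤ 1/L := by
      rw [le_div_iff₀ hLpos]
      linarith [key, mul_comm L (1/u + 1/2 - 4*u)]
    linarith
  · -- 1/L ≤ 1/u + 1/2 + 4u
    have key : 1 ≤ (u - u^2/2 - 2*u^3) * (1/u + 1/2 + 4*u) := by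
      have e : (u - u^2/2 - 2*u^3) * (1/u + 1/2 + 4*u) =
          1 + (7/4)*u^2 - 3*u^3 - 8*u^4 := by field_simp; ring
      nlinarith [sq_nonneg u, pow_pos hu0 4]
    have h1 : 1/L ≤ 1/(u - u^2/2 - 2*u^3) := one_div_le_one_div_of_le hXpos hLlo
    have h2 : 1/(u - u^2/2 - 2*u^3) ≤ 1/u + 1/2 + 4*u := by
      rw [div_le_iff₀ hXpos]
      nlinarith [key]
    linarith


set_option maxHeartbeats 1000000 in
/-- Parameter tuning of the blanket-mixed Gaussian mechanism: with
`A = χ^{-2/3}`, `γ = 1 - A`, `u = (1-A)/(A²χ²)`, `σ₀² = 1/log(1+u)`, the lower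
shuffle index squared equals `χ²` exactly, and the worst-case single-user MSE
`d σ₀²/A² + γ/A` equals `d χ² (1 + (3/2) χ^{-2/3} + O(χ^{-4/3}))` as `χ → ∞`. -/
theorem blanket_mixed_gaussian_tuning (d : ℕ) (hd : 1 ≤ d) :
    let A : ℝ → ℝ := fun χ => χ ^ (-(2 : ℝ) / 3)
    let γ : ℝ → ℝ := fun χ => 1 - A χ
    let u : ℝ → ℝ := fun χ => (1 - A χ) / ((A χ) ^ 2 * χ ^ 2)
    let σ0sq : ℝ → ℝ := fun χ => 1 / Real.log (1 + u χ)
    (∀ χ : ℝ, 1 < χ →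
        γ χ / ((1 - γ χ) ^ 2 * (Real.exp (1 / σ0sq χ) - 1)) = χ ^ 2)
      ∧ (fun χ : ℝ =>
            ((d : ℝ) * σ0sq χ / (A χ) ^ 2 + γ χ / A χ)
              - (d : ℝ) * χ ^ 2 * (1 + (3 / 2) * χ ^ (-(2 : ℝ) / 3)))
          =O[atTop] fun χ : ℝ => (d : ℝ) * χ ^ 2 * χ ^ (-(4 : ℝ) / 3) := by
  intro A γ u σ0sq
  constructor
  · intro χ hχ
    have hχ0 : (0:ℝ) < χ := lt_trans one_pos hχ
    have hA0 : 0 < A χ := Real.rpow_pos_of_pos hχ0 _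
    have hA1 : A χ < 1 := Real.rpow_lt_one_of_one_lt_of_neg hχ (by norm_num)
    have hu0 : 0 < u χ := div_pos (by linarith) (by positivity)
    have hL : 0 < Real.log (1 + u χ) := Real.log_pos (by linarith)
    simp only [γ, σ0sq]
    rw [sub_sub_cancel, one_div_one_div, Real.exp_log (by linarith), add_sub_cancel_left]
    show (1 - A χ) / ((A χ)^2 * ((1 - A χ) / ((A χ)^2 * χ^2))) = χ^2
    have hA : A χ ≠ 0 := ne_of_gt hA0
    have h1A : 1 - A χ ≠ 0 := by linarith
    field_simp
  · rw [isBigO_iff]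
    refine ⟨7, ?_⟩
    filter_upwards [eventually_ge_atTop (8:ℝ)] with χ hχ
    have hχ0 : (0:ℝ) < χ := by linarith
    simp only [A, γ, u, σ0sq]
    set t : ℝ := χ ^ (-(2:ℝ)/3) with htdef
    have ht0 : 0 < t := Real.rpow_pos_of_pos hχ0 _
    have h3 : t ^ 3 * χ ^ 2 = 1 := by
      rw [htdef, ← Real.rpow_natCast (χ ^ (-(2:ℝ)/3)) 3, ← Real.rpow_mul hχ0.le,
        ← Real.rpow_natCast χ 2, ← Real.rpow_add hχ0]
      norm_num
    have hT : χ ^ (-(4:ℝ)/3) = t ^ 2 := by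
      rw [htdef, ← Real.rpow_natCast (χ ^ (-(2:ℝ)/3)) 2, ← Real.rpow_mul hχ0.le]
      norm_num
    have hχ2 : χ ^ 2 = 1 / t ^ 3 := by
      field_simp
      linarith [h3]
    have htq : t ≤ 1/4 := by
      have h64 : (64:ℝ) ≤ χ ^ 2 := by nlinarith
      have ht3 : t ^ 3 ≤ 1 / 64 := by
        rw [hχ2] at h64
        rw [le_div_iff₀ (pow_pos ht0 3)] at h64
        linarith
      nlinarith [sq_nonneg (t - 1/4), sq_nonneg (t + 1/4), ht0]
    have h2 : t ^ 2 * χ ^ 2 = 1 / t := by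
      rw [hχ2]; field_simp
    have htne : t ≠ 0 := ne_of_gt ht0
    have h1tpos : (0:ℝ) < 1 - t := by linarith
    have hne : (1:ℝ) - t ≠ 0 := ne_of_gt h1tpos
    have huv : (1 - t) / (t ^ 2 * χ ^ 2) = (1 - t) * t := by
      rw [h2, div_div_eq_mul_div, div_one]
    rw [huv]
    -- abbreviations
    set v : ℝ := (1 - t) * t with hvdef
    have hv0 : 0 < v := by
      exact mul_pos h1tpos ht0
    have hv4 : v ≤ 1/4 := by nlinarith
    have hvt : v ≤ t := by nlinarith
    set L : ℝ := Real.log (1 + v) with hLdef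
    have hLpos : 0 < L := Real.log_pos (by linarith)
    have hkey : |1 / L - (1/v + 1/2)| ≤ 4 * v := invlog_bound v hv0 hv4
    have hsplit : 1/v = 1/t + 1/(1-t) := by
      rw [hvdef]; field_simp; ring
    have hfrac : 1/(1-t) - 1 = t/(1-t) := by
      field_simp
      ring
    have hfrac2 : t/(1-t) ≤ 2*t := by
      rw [div_le_iff₀ (by linarith : (0:ℝ) < 1 - t)]
      nlinarith
    have hfrac0 : 0 ≤ t/(1-t) := by positivity
    have hE : |1 / L - (1/t + 3/2)| ≤ 6 * t := by
      have : 1 / L - (1/t + 3/2) = (1 / L - (1/v + 1/2)) + (1/(1-t) - 1) := by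
        rw [hsplit]; ring
      rw [this]
      calc |(1 / L - (1/v + 1/2)) + (1/(1-t) - 1)|
          ≤ |1 / L - (1/v + 1/2)| + |1/(1-t) - 1| := abs_add_le _ _
        _ ≤ 4 * v + 2 * t := by
            refine add_le_add hkey ?_
            rw [hfrac, abs_of_nonneg hfrac0]; exact hfrac2
        _ ≤ 6 * t := by linarith
    -- rewrite the target
    have hdr : (1:ℝ) ≤ (d:ℝ) := by exact_mod_cast hd
    have harg : (d:ℝ) * (1 / L) / t ^ 2 + (1 - t) / t - (d:ℝ) * χ ^ 2 * (1 + 3/2 * t)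
        = ((d:ℝ) / t ^ 2) * (1 / L - (1/t + 3/2)) + (1 - t) / t := by
      rw [hχ2]
      field_simp
      ring
    have hrhs : (d:ℝ) * χ ^ 2 * χ ^ (-(4:ℝ)/3) = (d:ℝ) / t := by
      rw [hT, hχ2]
      field_simp
    rw [Real.norm_eq_abs, Real.norm_eq_abs, harg, hrhs, abs_of_pos (div_pos (by linarith) ht0)]
    calc |((d:ℝ) / t ^ 2) * (1 / L - (1/t + 3/2)) + (1 - t) / t|
        ≤ |((d:ℝ) / t ^ 2) * (1 / L - (1/t + 3/2))| + |(1 - t)/t| := abs_add_le _ _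
      _ ≤ ((d:ℝ) / t ^ 2) * (6 * t) + 1 / t := by
          refine add_le_add ?_ ?_
          · rw [abs_mul, abs_of_pos (by positivity : (0:ℝ) < (d:ℝ)/t^2)]
            exact mul_le_mul_of_nonneg_left hE (by positivity)
          · rw [abs_of_nonneg (by positivity : (0:ℝ) ≤ (1-t)/t)]
            rw [div_le_div_iff₀ (by linarith) ht0]
            nlinarith
      _ ≤ 7 * ((d:ℝ) / t) := by
          have : ((d:ℝ) / t ^ 2) * (6 * t) = 6 * ((d:ℝ)/t) := by
            field_simp
          rw [this]
          have h1t : 1/t ≤ (d:ℝ)/t := by gcongr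
          linarith
end

section
/- Let $\Phi$ be the standard normal CDF, $\phi$ its density, and $Q(\tau) := 1 - \Phi(\tau)$. Define $C(\tau) := \frac{\Phi(\tau)\,Q(\tau)}{\phi(\tau)^2}$ for $\tau \in \mathbb{R}$. Then $C$ is even, $C(0) = \pi/2$, and $\inf_{\tau\in\mathbb{R}} C(\tau) = C(0) = \pi/2$, with $\tau = 0$ the unique global minimizer. -/
open Real MeasureTheory Set Filter Topology

noncomputable def gpdf (t : ℝ) : ℝ := (Real.sqrt (2 * π))⁻¹ * Real.exp (-t ^ 2 / 2)

lemma gpdf_cont : Continuous gpdf := by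
  unfold gpdf; fun_prop

lemma gpdf_pos (t : ℝ) : 0 < gpdf t := by
  unfold gpdf; positivity

lemma sqrt_two_pi_pos : 0 < Real.sqrt (2 * π) := by positivity

lemma gpdf_eq (t : ℝ) : gpdf t = (Real.sqrt (2 * π))⁻¹ * Real.exp (-(1/2) * t ^ 2) := by
  unfold gpdf; ring_nf

lemma gpdf_integrable : Integrable gpdf := by
  have h := (integrable_exp_neg_mul_sq (b := 1/2) (by norm_num)).const_mul (Real.sqrt (2 * π))⁻¹
  refine h.congr ?_
  filter_upwards with x
  rw [gpdf_eq]

lemma gpdf_even (t : ℝ) : gpdf (-t) = gpdf t := by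
  unfold gpdf; rw [neg_pow]; ring_nf

lemma integral_gpdf_Ioi : ∫ x in Ioi (0:ℝ), gpdf x = 1/2 := by
  simp_rw [gpdf_eq]
  rw [integral_const_mul, integral_gaussian_Ioi]
  have : π / (1/2) = 2 * π := by ring
  rw [this]
  field_simp

noncomputable def gI (t : ℝ) : ℝ := ∫ x in (0:ℝ)..t, gpdf x

lemma hasDerivAt_gI (t : ℝ) : HasDerivAt gI (gpdf t) t :=
  (gpdf_cont.integral_hasStrictDerivAt 0 t).hasDerivAt

lemma gI_cont : Continuous gI := by
  have : ∀ t, HasDerivAt gI (gpdf t) t := hasDerivAt_gI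
  exact continuous_iff_continuousAt.2 fun t => (this t).continuousAt

lemma gI_zero : gI 0 = 0 := intervalIntegral.integral_same

lemma gI_odd (t : ℝ) : gI (-t) = - gI t := by
  unfold gI
  rw [intervalIntegral.integral_symm, ← neg_zero, ← intervalIntegral.integral_comp_neg gpdf]
  simp_rw [gpdf_even, neg_zero]

lemma gI_tendsto : Tendsto gI atTop (𝓝 (1/2)) := by
  rw [← integral_gpdf_Ioi]
  exact intervalIntegral_tendsto_integral_Ioi 0 gpdf_integrable.integrableOn tendsto_id

lemma cdf_eq (t : ℝ) : stdNormalCDF t = 1/2 + gI t := by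
  have h0 : stdNormalCDF 0 = 1/2 := by
    unfold stdNormalCDF
    have : ∀ s : ℝ, (Real.sqrt (2 * π))⁻¹ * Real.exp (-s ^ 2 / 2) = gpdf s := fun s => rfl
    simp_rw [this]
    have := integral_comp_neg_Iic (0:ℝ) gpdf
    simp_rw [gpdf_even, neg_zero] at this
    rw [this, integral_gpdf_Ioi]
  have h1 : stdNormalCDF t - stdNormalCDF 0 = gI t := by
    unfold stdNormalCDF gI
    exact intervalIntegral.integral_Iic_sub_Iic gpdf_integrable.integrableOn
      gpdf_integrable.integrableOn
  linarith

noncomputable def gg (t : ℝ) : ℝ := Real.sqrt (2*π)/4 * (t * Real.exp (-t^2/2)) - gI t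

noncomputable def FF (t : ℝ) : ℝ := (1 - Real.exp (-t^2))/4 - (gI t)^2

lemma exp_sq (t : ℝ) : Real.exp (-t^2/2) * Real.exp (-t^2/2) = Real.exp (-t^2) := by
  rw [← Real.exp_add]; ring_nf

lemma sqrt_two_pi_sq : Real.sqrt (2*π) * Real.sqrt (2*π) = 2*π :=
  Real.mul_self_sqrt (by positivity)

lemma hasDerivAt_exp_neg_sq_half (t : ℝ) :
    HasDerivAt (fun t : ℝ => Real.exp (-t^2/2)) (Real.exp (-t^2/2) * (-t)) t := by
  have h1 : HasDerivAt (fun t : ℝ => -t^2/2) (-t) t := by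
    have := ((hasDerivAt_pow 2 t).neg).div_const 2
    simpa using this.congr_deriv (by ring)
  exact h1.exp

lemma hasDerivAt_gg (t : ℝ) :
    HasDerivAt gg (Real.exp (-t^2/2) * (Real.sqrt (2*π))⁻¹ * (π/2 * (1-t^2) - 1)) t := by
  have h1 : HasDerivAt (fun t : ℝ => t * Real.exp (-t^2/2))
      (1 * Real.exp (-t^2/2) + t * (Real.exp (-t^2/2) * (-t))) t :=
    (hasDerivAt_id t).mul (hasDerivAt_exp_neg_sq_half t)
  have h2 := ((h1.const_mul (Real.sqrt (2*π)/4)).sub (hasDerivAt_gI t))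
  refine h2.congr_deriv ?_
  unfold gpdf
  have hs := sqrt_two_pi_sq
  have hs0 : Real.sqrt (2*π) ≠ 0 := ne_of_gt sqrt_two_pi_pos
  set s := Real.sqrt (2*π) with hsdef
  field_simp
  linear_combination (2 * (1 - t^2)) * hs

lemma hasDerivAt_FF (t : ℝ) : HasDerivAt FF (2 * gpdf t * gg t) t := by
  have h1 : HasDerivAt (fun t : ℝ => -t^2) (-(2*t)) t := by
    exact (hasDerivAt_pow 2 t).neg.congr_deriv (by ring)
  have h2 := (((hasDerivAt_const t (1:ℝ)).sub h1.exp).div_const 4)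
  have h3 : HasDerivAt (fun t => (gI t)^2) (2 * gI t * gpdf t) t := by
    exact ((hasDerivAt_gI t).pow 2).congr_deriv (by ring)
  refine (h2.sub h3).congr_deriv ?_
  unfold gg gpdf
  have hs := sqrt_two_pi_sq
  have hs0 : Real.sqrt (2*π) ≠ 0 := ne_of_gt sqrt_two_pi_pos
  rw [← exp_sq t]
  set s := Real.sqrt (2*π) with hsdef
  field_simp
  ring

lemma gg_cont : Continuous gg :=
  continuous_iff_continuousAt.2 fun t => (hasDerivAt_gg t).continuousAt

lemma FF_cont : Continuous FF :=
  continuous_iff_continuousAt.2 fun t => (hasDerivAt_FF t).continuousAt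

lemma gg_zero : gg 0 = 0 := by simp [gg, gI_zero]

lemma two_div_pi_lt_one : 2/π < 1 :=
  (div_lt_one Real.pi_pos).2 (by nlinarith [Real.pi_gt_three])

lemma two_div_pi_pos : 0 < 2/π := by positivity

noncomputable def aa : ℝ := Real.sqrt (1 - 2/π)

lemma aa_pos : 0 < aa := Real.sqrt_pos.2 (by linarith [two_div_pi_lt_one])

lemma aa_lt_two : aa < 2 := by
  have h1 : aa ≤ 1 := Real.sqrt_le_one.2 (by linarith [two_div_pi_pos])
  linarith

lemma aa_sq : aa^2 = 1 - 2/π := Real.sq_sqrt (by linarith [two_div_pi_lt_one])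

lemma cancel_pi : (2/π) * π = 2 := div_mul_cancel₀ 2 (ne_of_gt Real.pi_pos)

lemma gg_strictMonoOn : StrictMonoOn gg (Icc 0 aa) := by
  apply strictMonoOn_of_deriv_pos (convex_Icc 0 aa) gg_cont.continuousOn
  intro x hx
  rw [interior_Icc] at hx
  rw [(hasDerivAt_gg x).deriv]
  have hx2 : x^2 < 1 - 2/π := by
    have := aa_sq
    nlinarith [hx.1, hx.2, aa_pos]
  have h5 := mul_lt_mul_of_pos_right hx2 Real.pi_pos
  have h3 : 0 < π/2 * (1-x^2) - 1 := by nlinarith [h5, cancel_pi]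
  positivity

lemma gg_strictAntiOn : StrictAntiOn gg (Ici aa) := by
  apply strictAntiOn_of_deriv_neg (convex_Ici aa) gg_cont.continuousOn
  intro x hx
  rw [interior_Ici] at hx
  rw [(hasDerivAt_gg x).deriv]
  have hx2 : 1 - 2/π < x^2 := by
    have := aa_sq
    nlinarith [aa_pos, mem_Ioi.1 hx]
  have h5 := mul_lt_mul_of_pos_right hx2 Real.pi_pos
  have h3 : π/2 * (1-x^2) - 1 < 0 := by nlinarith [h5, cancel_pi]
  have h1 : 0 < Real.exp (-x^2/2) * (Real.sqrt (2*π))⁻¹ := by positivity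
  nlinarith

lemma gg_aa_pos : 0 < gg aa := by
  have := gg_strictMonoOn (left_mem_Icc.2 aa_pos.le) (right_mem_Icc.2 aa_pos.le) aa_pos
  rwa [gg_zero] at this

lemma pi_lt_exp : π < Real.exp (3/2) := by
  have h1 : Real.exp (3/2) * Real.exp (3/2) = Real.exp 1 * Real.exp 1 * Real.exp 1 := by
    rw [← Real.exp_add, ← Real.exp_add, ← Real.exp_add]; norm_num
  nlinarith [Real.exp_one_gt_d9, Real.pi_lt_d2, Real.exp_pos (3/2 : ℝ), Real.pi_pos]

lemma gg_two_neg : gg 2 < 0 := by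
  have hI1 : (Real.sqrt (2*π))⁻¹ * Real.exp (-(1:ℝ)/2) ≤ gI 1 := by
    have h := intervalIntegral.integral_mono_on (μ := volume) (a := (0:ℝ)) (b := 1)
      (f := fun _ => (Real.sqrt (2*π))⁻¹ * Real.exp (-(1:ℝ)/2)) (g := gpdf)
      (by norm_num) (continuous_const.intervalIntegrable 0 1)
      (gpdf_cont.intervalIntegrable 0 1) ?_
    · simpa [gI] using h
    · intro x hx
      unfold gpdf
      have : Real.exp (-(1:ℝ)/2) ≤ Real.exp (-x^2/2) := by
        apply Real.exp_le_exp.2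
        nlinarith [hx.1, hx.2]
      have h0 : (0:ℝ) < (Real.sqrt (2*π))⁻¹ := by positivity
      nlinarith
  have hI2 : gI 1 ≤ gI 2 := by
    have h := intervalIntegral.integral_add_adjacent_intervals (μ := volume)
      (gpdf_cont.intervalIntegrable 0 1) (gpdf_cont.intervalIntegrable 1 2)
    have h2 : 0 ≤ ∫ x in (1:ℝ)..2, gpdf x :=
      intervalIntegral.integral_nonneg (by norm_num) (fun x _ => (gpdf_pos x).le)
    unfold gI
    rw [← h]
    linarith
  have hkey : Real.sqrt (2*π)/4 * (2 * Real.exp (-(2:ℝ)^2/2)) <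
      (Real.sqrt (2*π))⁻¹ * Real.exp (-(1:ℝ)/2) := by
    have hs := sqrt_two_pi_sq
    have hs0 : (0:ℝ) < Real.sqrt (2*π) := sqrt_two_pi_pos
    rw [inv_mul_eq_div, lt_div_iff₀ hs0]
    have hcalc : Real.sqrt (2*π)/4 * (2 * Real.exp (-(2:ℝ)^2/2)) * Real.sqrt (2*π)
        = π * Real.exp (-(2:ℝ)^2/2) := by
      calc Real.sqrt (2*π)/4 * (2 * Real.exp (-(2:ℝ)^2/2)) * Real.sqrt (2*π)
          = Real.sqrt (2*π) * Real.sqrt (2*π) * (Real.exp (-(2:ℝ)^2/2)/2) := by ring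
        _ = 2*π * (Real.exp (-(2:ℝ)^2/2)/2) := by rw [hs]
        _ = π * Real.exp (-(2:ℝ)^2/2) := by ring
    rw [hcalc]
    have he : Real.exp (-(1:ℝ)/2) = Real.exp (3/2) * Real.exp (-(2:ℝ)^2/2) := by
      rw [← Real.exp_add]; norm_num
    rw [he]
    exact mul_lt_mul_of_pos_right pi_lt_exp (Real.exp_pos _)
  unfold gg
  linarith

lemma exists_root : ∃ b : ℝ, b ∈ Icc aa 2 ∧ gg b = 0 := by
  have h := intermediate_value_Icc' (le_of_lt aa_lt_two) (gg_cont.continuousOn (s := Icc aa 2))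
  have h0 : (0:ℝ) ∈ Icc (gg 2) (gg aa) := ⟨gg_two_neg.le, gg_aa_pos.le⟩
  obtain ⟨b, hb, hgb⟩ := h h0
  exact ⟨b, hb, hgb⟩

lemma FF_zero : FF 0 = 0 := by simp [FF, gI_zero]

lemma FF_tendsto : Tendsto FF atTop (𝓝 0) := by
  have h1 : Tendsto (fun t : ℝ => Real.exp (-t^2)) atTop (𝓝 0) := by
    apply Real.tendsto_exp_atBot.comp
    have : Tendsto (fun t : ℝ => t^2) atTop atTop := tendsto_pow_atTop (by norm_num)
    exact tendsto_neg_atBot_iff.2 this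
  have h2 : Tendsto (fun t => (gI t)^2) atTop (𝓝 ((1/2)^2)) := gI_tendsto.pow 2
  have h3 : Tendsto FF atTop (𝓝 ((1 - 0)/4 - (1/2)^2)) := by
    exact (((tendsto_const_nhds.sub h1).div_const 4).sub h2)
  norm_num at h3
  exact h3

lemma FF_pos {b : ℝ} (hb : b ∈ Icc aa 2) (hgb : gg b = 0) : ∀ t : ℝ, 0 < t → 0 < FF t := by
  have hb0 : 0 < b := lt_of_lt_of_le aa_pos hb.1
  have ggpos : ∀ x, 0 < x → x < b → 0 < gg x := by
    intro x hx hxb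
    rcases le_or_gt x aa with hxa | hxa
    · have := gg_strictMonoOn (left_mem_Icc.2 aa_pos.le) ⟨hx.le, hxa⟩ hx
      rwa [gg_zero] at this
    · have := gg_strictAntiOn hxa.le hb.1 hxb
      rwa [hgb] at this
  have ggneg : ∀ x, b < x → gg x < 0 := by
    intro x hx
    have := gg_strictAntiOn hb.1 (le_trans hb.1 hx.le) hx
    rwa [hgb] at this
  have mono : StrictMonoOn FF (Icc 0 b) := by
    apply strictMonoOn_of_deriv_pos (convex_Icc 0 b) FF_cont.continuousOn
    intro x hx
    rw [interior_Icc] at hx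
    rw [(hasDerivAt_FF x).deriv]
    have := ggpos x hx.1 hx.2
    have := gpdf_pos x
    positivity
  have anti : StrictAntiOn FF (Ici b) := by
    apply strictAntiOn_of_deriv_neg (convex_Ici b) FF_cont.continuousOn
    intro x hx
    rw [interior_Ici] at hx
    rw [(hasDerivAt_FF x).deriv]
    have h1 := ggneg x hx
    have h2 := gpdf_pos x
    nlinarith
  intro t ht
  rcases le_or_gt t b with htb | htb
  · have := mono (left_mem_Icc.2 hb0.le) ⟨ht.le, htb⟩ ht
    rwa [FF_zero] at this
  · have hnn : 0 ≤ FF (t+1) := by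
      apply le_of_tendsto FF_tendsto
      filter_upwards [eventually_ge_atTop (t+2)] with s hs
      rcases eq_or_lt_of_le (by linarith : t + 1 ≤ s) with h | h
      · exact le_of_eq (by rw [h])
      · exact (anti (by linarith : b ≤ t+1) (by linarith : b ≤ s) h).le
    have := anti (le_of_lt htb) (by linarith : b ≤ t+1) (by linarith)
    linarith

lemma key_ineq : ∀ t : ℝ, t ≠ 0 → (gI t)^2 < (1 - Real.exp (-t^2))/4 := by
  obtain ⟨b, hb, hgb⟩ := exists_root
  have hF := FF_pos hb hgb
  intro t ht
  rcases lt_or_gt_of_ne ht with h | h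
  · have := hF (-t) (by linarith)
    rw [show FF (-t) = FF t by unfold FF; rw [gI_odd, neg_sq, neg_sq]] at this
    unfold FF at this
    linarith
  · have := hF t h
    unfold FF at this
    linarith

lemma gpdf_sq (τ : ℝ) : (gpdf τ)^2 = (2*π)⁻¹ * Real.exp (-τ^2) := by
  unfold gpdf
  rw [mul_pow, sq (Real.exp _), exp_sq, inv_pow,
    Real.sq_sqrt (show (0:ℝ) ≤ 2*π by positivity)]

/-- The function `C(τ) = Φ(τ)Q(τ)/φ(τ)²` (the asymptotic leading constant of
PrivUnit's risk after shuffling) is even, equals `π/2` at `0`, and `τ = 0` is its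
unique global minimizer: `C(τ) > π/2` for all `τ ≠ 0`. -/
theorem privunit_constant_min :
    let φ : ℝ → ℝ := fun τ => (Real.sqrt (2 * π))⁻¹ * Real.exp (-τ ^ 2 / 2)
    let Q : ℝ → ℝ := fun τ => 1 - stdNormalCDF τ
    let C : ℝ → ℝ := fun τ => stdNormalCDF τ * Q τ / (φ τ) ^ 2
    (∀ τ : ℝ, C (-τ) = C τ) ∧ C 0 = π / 2 ∧ (∀ τ : ℝ, τ ≠ 0 → π / 2 < C τ) := by
  intro φ Q C
  have hC : ∀ τ, C τ = (1/4 - (gI τ)^2) / (gpdf τ)^2 := by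
    intro τ
    show stdNormalCDF τ * (1 - stdNormalCDF τ) / ((Real.sqrt (2*π))⁻¹ * Real.exp (-τ^2/2))^2 = _
    rw [cdf_eq]
    unfold gpdf
    ring_nf
  refine ⟨?_, ?_, ?_⟩
  · intro τ
    rw [hC, hC, gI_odd, gpdf_even, neg_sq]
  · rw [hC, gI_zero, gpdf_sq]
    have hπ : π ≠ 0 := ne_of_gt Real.pi_pos
    norm_num
    field_simp
    ring
  · intro τ hτ
    rw [hC, gpdf_sq]
    have hE : (0:ℝ) < Real.exp (-τ^2) := Real.exp_pos _
    have hden : (0:ℝ) < (2*π)⁻¹ * Real.exp (-τ^2) := by positivity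
    rw [lt_div_iff₀ hden]
    have hcancel : π/2 * ((2*π)⁻¹ * Real.exp (-τ^2)) = Real.exp (-τ^2)/4 := by
      have hπ : π ≠ 0 := ne_of_gt Real.pi_pos
      field_simp
      ring
    rw [hcancel]
    have := key_ineq τ hτ
    linarith
end
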